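/- arXiv:1601.06578 — 2 statements merged into one kernel-verified Lean document; each statement's English description precedes it below -/
import Mathlib

section
/- Let F(x) = 1 - e^{-x} ∑_{m=0}^{M-1} x^m/m! be the Erlang-M CDF, and let μ > 0, ξ ≥ 2, d₀ > 0, δ = 2/ξ. Then the two-dimensional polar integral 2π ∫_{d₀}^∞ (1 - F(μ r^ξ)) r dr equals (π δ / μ^δ) ∑_{m=0}^{M-1} Γ(m + δ, μ d₀^ξ)/m!. -/
open MeasureTheory Finset

/-- The upper incomplete Gamma function `Γ(a, x) = ∫_x^∞ t^(a-1) e^(-t) dt`. -/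
noncomputable def uiGamma (a x : ℝ) : ℝ :=
  ∫ t in Set.Ioi x, t ^ (a - 1) * Real.exp (-t)

/-- With `F` the Erlang-`M` CDF, `μ > 0`, `ξ ≥ 2`, `d₀ > 0` and `δ = 2/ξ`, the polar
integral `2π ∫_{d₀}^∞ (1 - F(μ r^ξ)) r dr` equals
`(π δ / μ^δ) ∑_{m=0}^{M-1} Γ(m + δ, μ d₀^ξ)/m!`. -/
theorem stmt2_polar_integral_eq (M : ℕ) (F : ℝ → ℝ)
    (hF : ∀ x : ℝ, F x = 1 - Real.exp (-x) * ∑ m ∈ range M, x ^ m / (Nat.factorial m))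
    (μ ξ d₀ δ : ℝ) (hμ : 0 < μ) (hξ : 2 ≤ ξ) (hd₀ : 0 < d₀) (hδ : δ = 2 / ξ) :
    2 * Real.pi * ∫ r in Set.Ioi d₀, (1 - F (μ * r ^ ξ)) * r
      = Real.pi * δ / μ ^ δ *
        ∑ m ∈ range M, uiGamma ((m : ℝ) + δ) (μ * d₀ ^ ξ) / (Nat.factorial m) := by
  have hξ0 : (0:ℝ) < ξ := lt_of_lt_of_le two_pos hξ
  have hδ0 : 0 < δ := by rw [hδ]; positivity
  have hξδ : ξ * δ = 2 := by rw [hδ]; field_simp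
  set s : Set ℝ := Set.Ioi d₀ with hs_def
  set f : ℝ → ℝ := fun r => μ * r ^ ξ with hf_def
  set f' : ℝ → ℝ := fun r => μ * (ξ * r ^ (ξ - 1)) with hf'_def
  have hpos : ∀ x ∈ s, (0:ℝ) < x := fun x hx => hd₀.trans hx
  have hderiv : ∀ x ∈ s, HasDerivWithinAt f (f' x) s x := fun x hx =>
    ((Real.hasDerivAt_rpow_const (Or.inl (hpos x hx).ne')).const_mul μ).hasDerivWithinAt
  have hinj : Set.InjOn f s := by
    intro a ha b hb hab
    have h1 : a ^ ξ = b ^ ξ := by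
      have := hab
      simp only [hf_def] at this
      exact mul_left_cancel₀ hμ.ne' this
    exact Real.rpow_left_injOn hξ0.ne' (le_of_lt (hpos a ha)) (le_of_lt (hpos b hb)) h1
  have himg : f '' s = Set.Ioi (μ * d₀ ^ ξ) := by
    ext y
    constructor
    · rintro ⟨x, hx, rfl⟩
      exact Set.mem_Ioi.2 (by
        have : d₀ ^ ξ < x ^ ξ := Real.rpow_lt_rpow hd₀.le hx hξ0
        exact mul_lt_mul_of_pos_left this hμ)
    · intro hy
      have hy0 : 0 < y := lt_trans (by positivity) hy
      refine ⟨(y / μ) ^ (1 / ξ), ?_, ?_⟩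
      · have h1 : d₀ ^ ξ < y / μ := (lt_div_iff₀' hμ).2 hy
        have h2 : (d₀ ^ ξ) ^ (1 / ξ) < (y / μ) ^ (1 / ξ) :=
          Real.rpow_lt_rpow (by positivity) h1 (by positivity)
        rwa [← Real.rpow_mul hd₀.le, mul_one_div, div_self hξ0.ne', Real.rpow_one] at h2
      · have : ((y / μ) ^ (1 / ξ)) ^ ξ = y / μ := by
          rw [← Real.rpow_mul (by positivity), one_div, inv_mul_cancel₀ hξ0.ne', Real.rpow_one]
        simp only [hf_def, this]
        field_simp
  -- key per-term computation
  have hg_int : ∀ m : ℕ, IntegrableOn (fun t => t ^ ((m : ℝ) + δ - 1) * Real.exp (-t))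
      (Set.Ioi (μ * d₀ ^ ξ)) := by
    intro m
    have h0 : (0:ℝ) < (m : ℝ) + δ := by positivity
    have := (Real.GammaIntegral_convergent h0).mono_set
      (Set.Ioi_subset_Ioi (by positivity : (0:ℝ) ≤ μ * d₀ ^ ξ))
    exact this.congr_fun (fun x _ => mul_comm _ _) measurableSet_Ioi
  have habs : ∀ m : ℕ, ∀ x ∈ s,
      |f' x| • ((f x) ^ ((m : ℝ) + δ - 1) * Real.exp (-(f x)))
        = (ξ * μ ^ δ) * (Real.exp (-(μ * x ^ ξ)) * (μ * x ^ ξ) ^ m * x) := by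
    intro m x hx
    have hx0 : (0:ℝ) < x := hpos x hx
    have hfx0 : (0:ℝ) < μ * x ^ ξ := by positivity
    have habs' : |f' x| = μ * (ξ * x ^ (ξ - 1)) := by
      apply abs_of_pos; positivity
    have hsplit : (μ * x ^ ξ) ^ ((m : ℝ) + δ - 1)
        = (μ * x ^ ξ) ^ m * (μ ^ (δ - 1) * x ^ (ξ * (δ - 1))) := by
      rw [show (m : ℝ) + δ - 1 = (m : ℝ) + (δ - 1) by ring,
        Real.rpow_add hfx0, Real.rpow_natCast,
        Real.mul_rpow hμ.le (by positivity), ← Real.rpow_mul hx0.le]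
    have hμδ : μ * μ ^ (δ - 1) = μ ^ δ := by
      have h := (Real.rpow_add hμ 1 (δ - 1)).symm
      rw [Real.rpow_one, show (1:ℝ) + (δ - 1) = δ by ring] at h
      exact h
    have hxδ : x ^ (ξ - 1) * x ^ (ξ * (δ - 1)) = x := by
      rw [← Real.rpow_add hx0]
      have : ξ - 1 + ξ * (δ - 1) = 1 := by
        have := hξδ; nlinarith
      rw [this, Real.rpow_one]
    simp only [smul_eq_mul, habs', hf_def, hsplit]
    calc μ * (ξ * x ^ (ξ - 1)) * ((μ * x ^ ξ) ^ m * (μ ^ (δ - 1) * x ^ (ξ * (δ - 1))) *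
          Real.exp (-(μ * x ^ ξ)))
        = ξ * (μ * μ ^ (δ - 1)) * (Real.exp (-(μ * x ^ ξ)) * (μ * x ^ ξ) ^ m *
            (x ^ (ξ - 1) * x ^ (ξ * (δ - 1)))) := by ring
      _ = (ξ * μ ^ δ) * (Real.exp (-(μ * x ^ ξ)) * (μ * x ^ ξ) ^ m * x) := by
          rw [hμδ, hxδ]
  have hInt : ∀ m : ℕ, IntegrableOn
      (fun x => Real.exp (-(μ * x ^ ξ)) * (μ * x ^ ξ) ^ m * x) s := by
    intro m
    have h1 : IntegrableOn (fun x => |f' x| • ((f x) ^ ((m : ℝ) + δ - 1) * Real.exp (-(f x)))) s := by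
      have := (integrableOn_image_iff_integrableOn_abs_deriv_smul measurableSet_Ioi hderiv hinj
        (fun t => t ^ ((m : ℝ) + δ - 1) * Real.exp (-t))).1 (by rw [himg]; exact hg_int m)
      exact this
    have h1' : IntegrableOn
        (fun x => (ξ * μ ^ δ)⁻¹ * (|f' x| • ((f x) ^ ((m : ℝ) + δ - 1) * Real.exp (-(f x))))) s :=
      h1.const_mul _
    exact h1'.congr_fun (fun x hx => by beta_reduce; rw [habs m x hx]; field_simp) measurableSet_Ioi
  have hkey : ∀ m : ℕ, ∫ x in s, Real.exp (-(μ * x ^ ξ)) * (μ * x ^ ξ) ^ m * x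
      = (ξ * μ ^ δ)⁻¹ * uiGamma ((m : ℝ) + δ) (μ * d₀ ^ ξ) := by
    intro m
    have h1 : uiGamma ((m : ℝ) + δ) (μ * d₀ ^ ξ)
        = ∫ x in s, |f' x| • ((f x) ^ ((m : ℝ) + δ - 1) * Real.exp (-(f x))) := by
      rw [uiGamma, ← himg]
      exact integral_image_eq_integral_abs_deriv_smul measurableSet_Ioi hderiv hinj _
    rw [h1, ← integral_const_mul]
    apply setIntegral_congr_fun measurableSet_Ioi
    intro x hx
    dsimp only
    rw [habs m x hx]
    field_simp
  have hfun : ∀ r : ℝ, (1 - F (μ * r ^ ξ)) * r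
      = ∑ m ∈ range M, ((Nat.factorial m : ℝ))⁻¹ *
          (Real.exp (-(μ * r ^ ξ)) * (μ * r ^ ξ) ^ m * r) := by
    intro r
    rw [hF, sub_sub_cancel, Finset.mul_sum, Finset.sum_mul]
    exact Finset.sum_congr rfl fun m _ => by first | (field_simp; ring) | field_simp
  have hLHS : ∫ r in s, (1 - F (μ * r ^ ξ)) * r
      = ∑ m ∈ range M, ((Nat.factorial m : ℝ))⁻¹ *
          ((ξ * μ ^ δ)⁻¹ * uiGamma ((m : ℝ) + δ) (μ * d₀ ^ ξ)) := by
    rw [show (fun r => (1 - F (μ * r ^ ξ)) * r)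
        = fun r => ∑ m ∈ range M, ((Nat.factorial m : ℝ))⁻¹ *
            (Real.exp (-(μ * r ^ ξ)) * (μ * r ^ ξ) ^ m * r) from funext hfun]
    rw [integral_finset_sum _ (fun m _ => (hInt m).const_mul _)]
    exact Finset.sum_congr rfl fun m _ => by rw [integral_const_mul, hkey m]
    
  rw [hLHS, Finset.mul_sum, Finset.mul_sum]
  refine Finset.sum_congr rfl fun m _ => ?_
  have hμδ0 : (0:ℝ) < μ ^ δ := Real.rpow_pos_of_pos hμ δ
  have hfac : (0:ℝ) < (Nat.factorial m : ℝ) := by positivity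
  rw [hδ]
  field_simp
end

section
/- The function P^out(μ) = exp[-(π λ δ / μ^δ) ∑_{m=0}^{M-1} Γ(m + δ, μ d₀^ξ)/m!] is nondecreasing in μ > 0, where δ = 2/ξ with ξ ≥ 2, λ > 0, d₀ > 0, and Γ is the upper incomplete Gamma function. -/
open MeasureTheory Finset

lemma aux_integrable {a μ c : ℝ} (ha : 0 < a) (hμ : 0 < μ) (hc : 0 < c) :
    IntegrableOn (fun u : ℝ => (μ * u) ^ (a - 1) * Real.exp (-(μ * u))) (Set.Ioi c) := by
  have h1 : IntegrableOn (fun t : ℝ => t ^ (a - 1) * Real.exp (-t)) (Set.Ioi (μ * c)) := by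
    have h2 := (Real.GammaIntegral_convergent ha).mono_set
      (Set.Ioi_subset_Ioi (by positivity : (0:ℝ) ≤ μ * c))
    exact h2.congr_fun (fun x _ => mul_comm _ _) measurableSet_Ioi
  exact (integrableOn_Ioi_comp_mul_left_iff
    (fun t : ℝ => t ^ (a - 1) * Real.exp (-t)) c hμ).mpr h1

lemma aux_integrable' {a μ c : ℝ} (ha : 0 < a) (hμ : 0 < μ) (hc : 0 < c) :
    IntegrableOn (fun u : ℝ => u ^ (a - 1) * Real.exp (-(μ * u))) (Set.Ioi c) := by
  have h : IntegrableOn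
      (fun u : ℝ => μ ^ (1 - a) * ((μ * u) ^ (a - 1) * Real.exp (-(μ * u)))) (Set.Ioi c) :=
    (aux_integrable ha hμ hc).const_mul (μ ^ (1 - a))
  refine IntegrableOn.congr_fun h (fun u hu => ?_) measurableSet_Ioi
  have hu0 : 0 < u := hc.trans hu
  rw [Real.mul_rpow hμ.le hu0.le, ← mul_assoc, ← mul_assoc, ← Real.rpow_add hμ]
  simp [show (1 - a) + (a - 1) = 0 by ring]

lemma aux_key {a μ c : ℝ} (ha : 0 < a) (hμ : 0 < μ) (hc : 0 < c) :
    uiGamma a (μ * c) = μ ^ a * ∫ u in Set.Ioi c, u ^ (a - 1) * Real.exp (-(μ * u)) := by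
  have h := integral_comp_mul_left_Ioi
    (fun t : ℝ => t ^ (a - 1) * Real.exp (-t)) c hμ
  rw [smul_eq_mul] at h
  have h2 : uiGamma a (μ * c)
      = μ * ∫ x in Set.Ioi c, (μ * x) ^ (a - 1) * Real.exp (-(μ * x)) := by
    rw [uiGamma, h, ← mul_assoc, mul_inv_cancel₀ hμ.ne', one_mul]
  have h3 : (∫ x in Set.Ioi c, (μ * x) ^ (a - 1) * Real.exp (-(μ * x)))
      = μ ^ (a - 1) * ∫ x in Set.Ioi c, x ^ (a - 1) * Real.exp (-(μ * x)) := by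
    rw [← integral_const_mul]
    refine setIntegral_congr_fun measurableSet_Ioi (fun x hx => ?_)
    rw [Real.mul_rpow hμ.le (hc.trans hx).le]
    ring
  rw [h2, h3, ← mul_assoc]
  congr 1
  nth_rewrite 2 [show a = 1 + (a - 1) by ring]
  rw [Real.rpow_add hμ, Real.rpow_one]

lemma Fm_eq (m : ℕ) {δ : ℝ} (μ : ℝ) {u : ℝ} (hu : 0 < u) :
    u ^ (δ - 1) * ((μ * u) ^ m / (Nat.factorial m) * Real.exp (-(μ * u)))
      = (μ ^ m / (Nat.factorial m)) * (u ^ (((m : ℝ) + δ) - 1) * Real.exp (-(μ * u))) := by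
  rw [show ((m : ℝ) + δ) - 1 = (m : ℝ) + (δ - 1) by ring, Real.rpow_add hu,
    Real.rpow_natCast, mul_pow]
  ring

lemma Fm_int (m : ℕ) {δ μ c : ℝ} (hδ : 0 < δ) (hμ : 0 < μ) (hc : 0 < c) :
    IntegrableOn (fun u : ℝ =>
      u ^ (δ - 1) * ((μ * u) ^ m / (Nat.factorial m) * Real.exp (-(μ * u)))) (Set.Ioi c) := by
  have h : IntegrableOn (fun u : ℝ =>
      (μ ^ m / (Nat.factorial m)) * (u ^ (((m : ℝ) + δ) - 1) * Real.exp (-(μ * u))))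
      (Set.Ioi c) :=
    (aux_integrable' (a := (m : ℝ) + δ) (by positivity) hμ hc).const_mul
      (μ ^ m / (Nat.factorial m))
  exact IntegrableOn.congr_fun h (fun u hu => (Fm_eq m μ (hc.trans hu)).symm) measurableSet_Ioi

lemma aux_term (m : ℕ) {δ μ c : ℝ} (hδ : 0 < δ) (hμ : 0 < μ) (hc : 0 < c) :
    uiGamma ((m : ℝ) + δ) (μ * c) / (Nat.factorial m) / μ ^ δ
      = ∫ u in Set.Ioi c,
          u ^ (δ - 1) * ((μ * u) ^ m / (Nat.factorial m) * Real.exp (-(μ * u))) := by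
  have h1 : (∫ u in Set.Ioi c,
        u ^ (δ - 1) * ((μ * u) ^ m / (Nat.factorial m) * Real.exp (-(μ * u))))
      = (μ ^ m / (Nat.factorial m)) *
          ∫ u in Set.Ioi c, u ^ (((m : ℝ) + δ) - 1) * Real.exp (-(μ * u)) := by
    rw [← integral_const_mul]
    exact setIntegral_congr_fun measurableSet_Ioi (fun u hu => Fm_eq m μ (hc.trans hu))
  rw [h1, aux_key (by positivity) hμ hc,
    show μ ^ ((m : ℝ) + δ) = μ ^ m * μ ^ δ by rw [Real.rpow_add hμ, Real.rpow_natCast]]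
  have hf : (0:ℝ) < (Nat.factorial m : ℝ) := by positivity
  have hμδ : (0:ℝ) < μ ^ δ := Real.rpow_pos_of_pos hμ δ
  field_simp

lemma poisson_hasDeriv (N : ℕ) (x : ℝ) :
    HasDerivAt (fun x : ℝ => (∑ m ∈ range (N + 1), x ^ m / (Nat.factorial m)) * Real.exp (-x))
      (-(x ^ N / (Nat.factorial N) * Real.exp (-x))) x := by
  have hs : HasDerivAt (fun x : ℝ => ∑ m ∈ range (N + 1), x ^ m / (Nat.factorial m))
      (∑ m ∈ range N, x ^ m / (Nat.factorial m)) x := by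
    have h : HasDerivAt (fun x : ℝ => ∑ m ∈ range (N + 1), x ^ m / (Nat.factorial m))
        (∑ m ∈ range (N + 1), (m : ℝ) * x ^ (m - 1) / (Nat.factorial m)) x := by
      apply HasDerivAt.fun_sum
      intro m _
      exact (hasDerivAt_pow m x).div_const (Nat.factorial m)
    convert h using 1
    rw [Finset.sum_range_succ']
    simp only [Nat.cast_zero, zero_mul, Nat.factorial_zero, Nat.cast_one, zero_div, add_zero,
      Nat.add_sub_cancel, Nat.factorial_succ, Nat.cast_mul, Nat.cast_add, Nat.cast_one]
    refine Finset.sum_congr rfl (fun i _ => ?_)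
    have : (0:ℝ) < (Nat.factorial i : ℝ) := by positivity
    field_simp
  have he : HasDerivAt (fun x : ℝ => Real.exp (-x)) (-Real.exp (-x)) x := by
    simpa using (hasDerivAt_neg x).exp
  have hmul := hs.fun_mul he
  refine hmul.congr_deriv ?_
  rw [Finset.sum_range_succ]
  ring

lemma poisson_antitone (M : ℕ) :
    AntitoneOn (fun x : ℝ => (∑ m ∈ range M, x ^ m / (Nat.factorial m)) * Real.exp (-x))
      (Set.Ici 0) := by
  cases M with
  | zero => simp only [range_zero, Finset.sum_empty, zero_mul]; exact fun _ _ _ _ _ => le_refl 0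
  | succ N =>
    refine antitoneOn_of_deriv_nonpos (convex_Ici 0) ?_ ?_ ?_
    · exact fun x _ => ((poisson_hasDeriv N x).continuousAt).continuousWithinAt
    · exact fun x _ => (poisson_hasDeriv N x).differentiableAt.differentiableWithinAt
    · intro x hx
      rw [interior_Ici] at hx
      rw [(poisson_hasDeriv N x).deriv]
      have hx0 : 0 < x := hx
      have : 0 ≤ x ^ N / (Nat.factorial N : ℝ) * Real.exp (-x) := by positivity
      linarith

/-- The power outage probability
`P^out(μ) = exp[-(π λ δ / μ^δ) ∑_{m=0}^{M-1} Γ(m + δ, μ d₀^ξ)/m!]`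
is nondecreasing in `μ > 0`, where `δ = 2/ξ`, `ξ ≥ 2`, `λ > 0`, `d₀ > 0`. -/
theorem stmt3_outage_monotone (M : ℕ) (lam ξ d₀ δ : ℝ) (hlam : 0 < lam) (hξ : 2 ≤ ξ)
    (hd₀ : 0 < d₀) (hδ : δ = 2 / ξ)
    (Pout : ℝ → ℝ)
    (hPout : ∀ μ : ℝ, Pout μ = Real.exp (-(Real.pi * lam * δ / μ ^ δ *
        ∑ m ∈ range M, uiGamma ((m : ℝ) + δ) (μ * d₀ ^ ξ) / (Nat.factorial m)))) :
    ∀ μ₁ μ₂ : ℝ, 0 < μ₁ → μ₁ ≤ μ₂ → Pout μ₁ ≤ Pout μ₂ := by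
  have hξ0 : (0:ℝ) < ξ := lt_of_lt_of_le two_pos hξ
  have hδ0 : 0 < δ := by rw [hδ]; positivity
  set c : ℝ := d₀ ^ ξ with hc_def
  have hc : 0 < c := Real.rpow_pos_of_pos hd₀ ξ
  have repr : ∀ μ : ℝ, 0 < μ →
      (∑ m ∈ range M, uiGamma ((m : ℝ) + δ) (μ * c) / (Nat.factorial m)) / μ ^ δ
        = ∫ u in Set.Ioi c, u ^ (δ - 1) *
            ((∑ m ∈ range M, (μ * u) ^ m / (Nat.factorial m)) * Real.exp (-(μ * u))) := by
    intro μ hμ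
    rw [Finset.sum_div]
    rw [Finset.sum_congr rfl (fun m _ => aux_term m hδ0 hμ hc)]
    rw [← integral_finset_sum (range M) (fun m _ => Fm_int m hδ0 hμ hc)]
    congr 1
    funext u
    rw [Finset.sum_mul, Finset.mul_sum]
  have g_int : ∀ μ : ℝ, 0 < μ → IntegrableOn (fun u : ℝ => u ^ (δ - 1) *
      ((∑ m ∈ range M, (μ * u) ^ m / (Nat.factorial m)) * Real.exp (-(μ * u))))
      (Set.Ioi c) := by
    intro μ hμ
    have h := integrable_finset_sum (μ := volume.restrict (Set.Ioi c)) (range M)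
      (fun m _ => Fm_int m hδ0 hμ hc)
    exact h.congr (Filter.Eventually.of_forall
      (fun u => by simp only [Finset.sum_mul, Finset.mul_sum]))
  intro μ₁ μ₂ h1 h12
  have h2 : 0 < μ₂ := h1.trans_le h12
  rw [hPout, hPout]
  apply Real.exp_le_exp.mpr
  apply neg_le_neg
  have key : (∑ m ∈ range M, uiGamma ((m : ℝ) + δ) (μ₂ * c) / (Nat.factorial m)) / μ₂ ^ δ
      ≤ (∑ m ∈ range M, uiGamma ((m : ℝ) + δ) (μ₁ * c) / (Nat.factorial m)) / μ₁ ^ δ := by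
    rw [repr μ₁ h1, repr μ₂ h2]
    refine setIntegral_mono_on (g_int μ₂ h2) (g_int μ₁ h1) measurableSet_Ioi ?_
    intro u hu
    have hu0 : 0 < u := hc.trans hu
    refine mul_le_mul_of_nonneg_left ?_ (Real.rpow_nonneg hu0.le _)
    exact poisson_antitone M (Set.mem_Ici.mpr (mul_nonneg h1.le hu0.le))
      (Set.mem_Ici.mpr (mul_nonneg h2.le hu0.le))
      (mul_le_mul_of_nonneg_right h12 hu0.le)
  calc Real.pi * lam * δ / μ₂ ^ δ *
        ∑ m ∈ range M, uiGamma ((m : ℝ) + δ) (μ₂ * c) / (Nat.factorial m)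
      = Real.pi * lam * δ *
        ((∑ m ∈ range M, uiGamma ((m : ℝ) + δ) (μ₂ * c) / (Nat.factorial m)) / μ₂ ^ δ) := by
        ring
    _ ≤ Real.pi * lam * δ *
        ((∑ m ∈ range M, uiGamma ((m : ℝ) + δ) (μ₁ * c) / (Nat.factorial m)) / μ₁ ^ δ) := by
        refine mul_le_mul_of_nonneg_left key ?_
        have := Real.pi_pos
        positivity
    _ = Real.pi * lam * δ / μ₁ ^ δ *
        ∑ m ∈ range M, uiGamma ((m : ℝ) + δ) (μ₁ * c) / (Nat.factorial m) := by ring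
end
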